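/- arXiv:1206.5350 — 2 statements merged into one kernel-verified Lean document; each statement's English description precedes it below -/
import Mathlib

section
/- For every positive integer k, every good placement of queens on the n × n board B_n with n = 4k has size at least n. -/
/-- The n × n board: squares {1,…,n} × {1,…,n} ⊆ ℤ². -/
noncomputable def board (n : ℕ) : Finset (ℤ × ℤ) :=
  Finset.Icc (1 : ℤ) n ×ˢ Finset.Icc (1 : ℤ) n

/-- Two squares share a column, row, diagonal, or antidiagonal. -/
def SameLine (a b : ℤ × ℤ) : Prop :=
  a.1 = b.1 ∨ a.2 = b.2 ∨ a.1 - a.2 = b.1 - b.2 ∨ a.1 + a.2 = b.1 + b.2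

/-- A set of squares contains three (pairwise distinct) squares in a line. -/
def ThreeInLine (S : Finset (ℤ × ℤ)) : Prop :=
  ∃ a ∈ S, ∃ b ∈ S, ∃ c ∈ S, a ≠ b ∧ a ≠ c ∧ b ≠ c ∧
    ((a.1 = b.1 ∧ b.1 = c.1) ∨ (a.2 = b.2 ∧ b.2 = c.2) ∨
     (a.1 - a.2 = b.1 - b.2 ∧ b.1 - b.2 = c.1 - c.2) ∨
     (a.1 + a.2 = b.1 + b.2 ∧ b.1 + b.2 = c.1 + c.2))

/-- A good placement on B_n: a subset of the board with no three in a line,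
    such that adding any unoccupied square of the board creates three in a line. -/
def IsGoodPlacement (n : ℕ) (Q : Finset (ℤ × ℤ)) : Prop :=
  Q ⊆ board n ∧ ¬ ThreeInLine Q ∧
    ∀ s ∈ board n, s ∉ Q → ThreeInLine (insert s Q)

/-!
Suppose a good placement `Q` on the `n × n` board (`n ≥ 2`) has fewer than `n` queens, and call a
line full when it holds two queens. As `2 · #(full rows) ≤ |Q| < n`, at least two rows are not
full; let `y₁ < y₂` be the extreme ones and `x₁ < x₂` the extreme non-full columns, so all rows
and columns outside the rectangle `[x₁, x₂] × [y₁, y₂]` are full. Every empty square of the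
rectangle's boundary (the frame) lies on a full line, and a full line meets the frame at most
twice since the sides of the frame are not full; so on each such line the empty frame squares
are at most the queens off the frame. A queen lies on at most four full lines meeting the frame,
on its column only if it is within `[x₁, x₂]`, on its row only if it is within `[y₁, y₂]` and the
row is full. Since the queens outside these strips fill full lines, the count gives
`4n + r ≤ 4|Q| + 4`, with `r` the number of queens in non-full rows. Hence `|Q| = n - 1` and every
queen is in a full row, so `|Q|` is even and `n` is odd.
-/

open Finset

lemma card_filter_sdiff_add_card_filter_not {α : Type*} [DecidableEq α] {Q F : Finset α}
    {P : α → Prop} [DecidablePred P] (hF : ∀ c ∈ F, P c) :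
    #{p ∈ Q \ F | P p} + #{p ∈ Q | ¬ P p} = #(Q \ F) := by
  have : {p ∈ Q | ¬ P p} = {p ∈ Q \ F | ¬ P p} := by grind
  rw [this, card_filter_add_card_filter_not]

theorem card_sdiff_le_sum_card_filter {α ι : Type*} [DecidableEq α] {A B : Finset α}
    {L : Finset ι} (r : ι → α → Prop) [∀ ℓ a, Decidable (r ℓ a)]
    (hcover : ∀ a ∈ A \ B, ∃ ℓ ∈ L, r ℓ a)
    (hle : ∀ ℓ ∈ L, #{a ∈ A | r ℓ a} ≤ #{b ∈ B | r ℓ b}) :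
    #(A \ B) ≤ ∑ b ∈ B \ A, #{ℓ ∈ L | r ℓ b} := by
  have hsdiff : ∀ ℓ ∈ L, #{a ∈ A \ B | r ℓ a} ≤ #{b ∈ B \ A | r ℓ b} := by
    intro ℓ hℓ
    rw [show {a ∈ A \ B | r ℓ a} = {a ∈ A | r ℓ a} \ {b ∈ B | r ℓ b} by grind,
      show {b ∈ B \ A | r ℓ b} = {b ∈ B | r ℓ b} \ {a ∈ A | r ℓ a} by grind]
    have hA := card_sdiff_add_card_inter {a ∈ A | r ℓ a} {b ∈ B | r ℓ b}
    have hB := card_sdiff_add_card_inter {b ∈ B | r ℓ b} {a ∈ A | r ℓ a}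
    rw [inter_comm] at hB
    have := hle ℓ hℓ
    omega
  calc #(A \ B) = ∑ a ∈ A \ B, 1 := card_eq_sum_ones _
    _ ≤ ∑ a ∈ A \ B, #{ℓ ∈ L | r ℓ a} := sum_le_sum fun a ha => by
      obtain ⟨ℓ, hℓ, hr⟩ := hcover a ha
      exact card_pos.2 ⟨ℓ, mem_filter.2 ⟨hℓ, hr⟩⟩
    _ = ∑ ℓ ∈ L, #{a ∈ A \ B | r ℓ a} :=
      sum_card_bipartiteAbove_eq_sum_card_bipartiteBelow (fun a ℓ => r ℓ a)
    _ ≤ ∑ ℓ ∈ L, #{b ∈ B \ A | r ℓ b} := sum_le_sum hsdiff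
    _ = ∑ b ∈ B \ A, #{ℓ ∈ L | r ℓ b} :=
      (sum_card_bipartiteAbove_eq_sum_card_bipartiteBelow (fun b ℓ => r ℓ b)).symm

-- A line is encoded as `(i, v) : Fin 4 × ℤ`, the squares `p` with `lineCoord i p = v`; the
-- directions `i = 0, 1, 2, 3` are columns, rows, diagonals and antidiagonals.
def lineCoord : Fin 4 → ℤ × ℤ → ℤ
  | 0, p => p.1
  | 1, p => p.2
  | 2, p => p.1 - p.2
  | 3, p => p.1 + p.2

@[simp] lemma lineCoord_zero (p : ℤ × ℤ) : lineCoord 0 p = p.1 := rfl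
@[simp] lemma lineCoord_one (p : ℤ × ℤ) : lineCoord 1 p = p.2 := rfl
@[simp] lemma lineCoord_two (p : ℤ × ℤ) : lineCoord 2 p = p.1 - p.2 := rfl
@[simp] lemma lineCoord_three (p : ℤ × ℤ) : lineCoord 3 p = p.1 + p.2 := rfl

def OnLine (ℓ : Fin 4 × ℤ) (p : ℤ × ℤ) : Prop := lineCoord ℓ.1 p = ℓ.2

instance : DecidableRel OnLine := fun ℓ p => inferInstanceAs (Decidable (lineCoord ℓ.1 p = ℓ.2))

def lineThrough (i : Fin 4) (p : ℤ × ℤ) : Fin 4 × ℤ := (i, lineCoord i p)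

lemma onLine_lineThrough (i : Fin 4) (p : ℤ × ℤ) : OnLine (lineThrough i p) p := rfl

lemma OnLine.eq_lineThrough {ℓ : Fin 4 × ℤ} {p : ℤ × ℤ} (h : OnLine ℓ p) :
    ℓ = lineThrough ℓ.1 p :=
  Prod.ext rfl h.symm

def IsFull (Q : Finset (ℤ × ℤ)) (ℓ : Fin 4 × ℤ) : Prop := #{p ∈ Q | OnLine ℓ p} = 2

instance (Q : Finset (ℤ × ℤ)) : DecidablePred (IsFull Q) :=
  fun _ => inferInstanceAs (Decidable (_ = 2))

lemma threeInLine_iff {S : Finset (ℤ × ℤ)} :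
    ThreeInLine S ↔ ∃ ℓ, 2 < #{p ∈ S | OnLine ℓ p} := by
  simp only [ThreeInLine, two_lt_card, mem_filter]
  constructor
  · rintro ⟨a, ha, b, hb, c, hc, hab, hac, hbc, h⟩
    obtain ⟨i, hi⟩ : ∃ i, lineCoord i a = lineCoord i b ∧ lineCoord i b = lineCoord i c := by
      simpa [Fin.exists_fin_succ] using h
    exact ⟨(i, lineCoord i a), a, ⟨ha, rfl⟩, b, ⟨hb, hi.1.symm⟩, c, ⟨hc, (hi.1.trans hi.2).symm⟩,
      hab, hac, hbc⟩
  · rintro ⟨⟨i, v⟩, a, ⟨ha, hav⟩, b, ⟨hb, hbv⟩, c, ⟨hc, hcv⟩, hab, hac, hbc⟩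
    refine ⟨a, ha, b, hb, c, hc, hab, hac, hbc, ?_⟩
    have : ∃ i, lineCoord i a = lineCoord i b ∧ lineCoord i b = lineCoord i c :=
      ⟨i, hav.trans hbv.symm, hbv.trans hcv.symm⟩
    simpa [Fin.exists_fin_succ] using this

lemma card_filter_onLine_le_two {Q : Finset (ℤ × ℤ)} (hQ : ¬ ThreeInLine Q) (ℓ : Fin 4 × ℤ) :
    #{p ∈ Q | OnLine ℓ p} ≤ 2 :=
  not_lt.1 fun h => hQ (threeInLine_iff.2 ⟨ℓ, h⟩)

lemma exists_isFull_lineThrough {Q : Finset (ℤ × ℤ)} {s : ℤ × ℤ} (hQ : ¬ ThreeInLine Q)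
    (hs : ThreeInLine (insert s Q)) (hsQ : s ∉ Q) : ∃ i, IsFull Q (lineThrough i s) := by
  obtain ⟨ℓ, hℓ⟩ := threeInLine_iff.1 hs
  rw [filter_insert] at hℓ
  by_cases hsℓ : OnLine ℓ s
  · rw [if_pos hsℓ, card_insert_of_notMem fun h => hsQ (mem_filter.1 h).1] at hℓ
    refine ⟨ℓ.1, ?_⟩
    rw [← hsℓ.eq_lineThrough]
    exact le_antisymm (card_filter_onLine_le_two hQ ℓ) (by omega)
  · rw [if_neg hsℓ] at hℓ
    exact absurd hℓ (not_lt.2 (card_filter_onLine_le_two hQ ℓ))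

structure NonfullSpan (Q : Finset (ℤ × ℤ)) (n : ℕ) (i : Fin 4) (a b : ℤ) : Prop where
  one_le : 1 ≤ a
  lt : a < b
  le : b ≤ n
  not_isFull_left : ¬ IsFull Q (i, a)
  not_isFull_right : ¬ IsFull Q (i, b)
  isFull_of_notMem : ∀ v ∈ Icc (1 : ℤ) n, v ∉ Icc a b → IsFull Q (i, v)

lemma card_filter_lineCoord_mem_eq_two_mul {Q : Finset (ℤ × ℤ)} {i : Fin 4} {T : Finset ℤ}
    (hT : ∀ v ∈ T, IsFull Q (i, v)) :
    #{p ∈ Q | lineCoord i p ∈ T} = 2 * #T := by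
  rw [← sum_card_fiberwise_eq_card_filter, mul_comm]
  exact sum_const_nat hT

lemma exists_nonfullSpan {Q : Finset (ℤ × ℤ)} {n : ℕ} (i : Fin 4) (hn : 2 ≤ n) (hQ : #Q < n) :
    ∃ a b, NonfullSpan Q n i a b := by
  have hfull : 2 * #{v ∈ Icc (1 : ℤ) n | IsFull Q (i, v)} ≤ #Q := by
    rw [← card_filter_lineCoord_mem_eq_two_mul fun v hv => (mem_filter.1 hv).2]
    exact card_filter_le _ _
  have hN : 1 < #{v ∈ Icc (1 : ℤ) n | ¬ IsFull Q (i, v)} := by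
    have := card_filter_add_card_filter_not (s := Icc (1 : ℤ) n) (fun v => IsFull Q (i, v))
    simp only [Int.card_Icc] at this
    omega
  set N := {v ∈ Icc (1 : ℤ) n | ¬ IsFull Q (i, v)}
  have hNne : N.Nonempty := card_pos.1 (by omega)
  have hmin := mem_filter.1 (N.min'_mem hNne)
  have hmax := mem_filter.1 (N.max'_mem hNne)
  refine ⟨N.min' hNne, N.max' hNne, (mem_Icc.1 hmin.1).1, N.min'_lt_max'_of_card hN,
    (mem_Icc.1 hmax.1).2, hmin.2, hmax.2, fun v hv hvI => ?_⟩
  by_contra hvN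
  exact hvI (mem_Icc.2 ⟨N.min'_le v (mem_filter.2 ⟨hv, hvN⟩), N.le_max' v (mem_filter.2 ⟨hv, hvN⟩)⟩)

lemma NonfullSpan.card_filter_notMem_Icc {Q : Finset (ℤ × ℤ)} {n : ℕ} {i : Fin 4} {a b : ℤ}
    (h : NonfullSpan Q n i a b) (hQ : ∀ p ∈ Q, lineCoord i p ∈ Icc (1 : ℤ) n) :
    #{p ∈ Q | lineCoord i p ∉ Icc a b} + 2 * #(Icc a b) = 2 * n := by
  have hout : {p ∈ Q | lineCoord i p ∉ Icc a b} =
      {p ∈ Q | lineCoord i p ∈ Icc (1 : ℤ) n \ Icc a b} := by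
    grind
  have hsub : Icc a b ⊆ Icc (1 : ℤ) n := Icc_subset_Icc h.one_le h.le
  have := card_sdiff_add_card_inter (Icc (1 : ℤ) n) (Icc a b)
  rw [inter_eq_right.2 hsub, Int.card_Icc 1 n] at this
  rw [hout, card_filter_lineCoord_mem_eq_two_mul fun v hv =>
    h.isFull_of_notMem v (mem_sdiff.1 hv).1 (mem_sdiff.1 hv).2]
  omega

section Frame

variable {x₁ x₂ y₁ y₂ : ℤ}

noncomputable def frame (x₁ x₂ y₁ y₂ : ℤ) : Finset (ℤ × ℤ) :=
  Icc x₁ x₂ ×ˢ {y₁, y₂} ∪ {x₁, x₂} ×ˢ Ioo y₁ y₂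

lemma mem_frame {c : ℤ × ℤ} : c ∈ frame x₁ x₂ y₁ y₂ ↔
    x₁ ≤ c.1 ∧ c.1 ≤ x₂ ∧ (c.2 = y₁ ∨ c.2 = y₂) ∨ (c.1 = x₁ ∨ c.1 = x₂) ∧ y₁ < c.2 ∧ c.2 < y₂ := by
  simp [frame, and_assoc]

lemma mem_Icc_of_mem_frame (hx : x₁ ≤ x₂) (hy : y₁ ≤ y₂) {c : ℤ × ℤ}
    (hc : c ∈ frame x₁ x₂ y₁ y₂) : c.1 ∈ Icc x₁ x₂ ∧ c.2 ∈ Icc y₁ y₂ := by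
  rw [mem_frame] at hc
  simp only [mem_Icc]
  omega

lemma card_frame (hx : x₁ < x₂) (hy : y₁ < y₂) :
    #(frame x₁ x₂ y₁ y₂) + 4 = 2 * #(Icc x₁ x₂) + 2 * #(Icc y₁ y₂) := by
  have hdisj : Disjoint (Icc x₁ x₂ ×ˢ {y₁, y₂}) ({x₁, x₂} ×ˢ Ioo y₁ y₂) := by
    rw [disjoint_left]
    intro c h1 h2
    simp only [mem_product, mem_Icc, mem_Ioo, mem_insert, mem_singleton] at h1 h2
    omega
  rw [frame, card_union_of_disjoint hdisj, card_product, card_product, card_pair hy.ne,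
    card_pair hx.ne, Int.card_Icc, Int.card_Ioo, Int.card_Icc]
  omega

lemma card_filter_onLine_frame_le_two {ℓ : Fin 4 × ℤ} (hx₁ : ℓ ≠ (0, x₁)) (hx₂ : ℓ ≠ (0, x₂))
    (hy₁ : ℓ ≠ (1, y₁)) (hy₂ : ℓ ≠ (1, y₂)) : #{c ∈ frame x₁ x₂ y₁ y₂ | OnLine ℓ c} ≤ 2 := by
  suffices ∃ u w, {c ∈ frame x₁ x₂ y₁ y₂ | OnLine ℓ c} ⊆ {u, w} by
    obtain ⟨u, w, h⟩ := this
    exact (card_le_card h).trans card_le_two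
  obtain ⟨i, v⟩ := ℓ
  match i with
  | 0 =>
    refine ⟨(v, y₁), (v, y₂), ?_⟩
    rintro ⟨cx, cy⟩ hc
    rw [mem_filter, mem_frame] at hc
    simp only [OnLine, lineCoord_zero, mem_insert, mem_singleton, ne_eq, Prod.mk.injEq,
      true_and] at hc hx₁ hx₂ ⊢
    omega
  | 1 =>
    refine ⟨(x₁, v), (x₂, v), ?_⟩
    rintro ⟨cx, cy⟩ hc
    rw [mem_filter, mem_frame] at hc
    simp only [OnLine, lineCoord_one, mem_insert, mem_singleton, ne_eq, Prod.mk.injEq,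
      true_and] at hc hy₁ hy₂ ⊢
    omega
  | 2 =>
    -- the points where the diagonal enters and leaves the rectangle
    refine ⟨(max x₁ (y₁ + v), max x₁ (y₁ + v) - v), (min x₂ (y₂ + v), min x₂ (y₂ + v) - v), ?_⟩
    rintro ⟨cx, cy⟩ hc
    rw [mem_filter, mem_frame] at hc
    simp only [OnLine, lineCoord_two, mem_insert, mem_singleton, Prod.mk.injEq] at hc ⊢
    omega
  | 3 =>
    refine ⟨(max x₁ (v - y₂), v - max x₁ (v - y₂)), (min x₂ (v - y₁), v - min x₂ (v - y₁)), ?_⟩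
    rintro ⟨cx, cy⟩ hc
    rw [mem_filter, mem_frame] at hc
    simp only [OnLine, lineCoord_three, mem_insert, mem_singleton, Prod.mk.injEq] at hc ⊢
    omega

end Frame

def fullLines (Q F : Finset (ℤ × ℤ)) : Finset (Fin 4 × ℤ) :=
  {ℓ ∈ (univ ×ˢ F).image (fun x => lineThrough x.1 x.2) | IsFull Q ℓ}

lemma mem_fullLines {Q F : Finset (ℤ × ℤ)} {ℓ : Fin 4 × ℤ} :
    ℓ ∈ fullLines Q F ↔ (∃ c ∈ F, OnLine ℓ c) ∧ IsFull Q ℓ := by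
  simp only [fullLines, mem_filter, mem_image, mem_product, mem_univ, true_and]
  constructor
  · rintro ⟨⟨⟨i, c⟩, hc, rfl⟩, h⟩
    exact ⟨⟨c, hc, onLine_lineThrough i c⟩, h⟩
  · rintro ⟨⟨c, hc, hℓ⟩, h⟩
    exact ⟨⟨(ℓ.1, c), hc, hℓ.eq_lineThrough.symm⟩, h⟩

lemma card_filter_onLine_eq_card_lineThrough (L : Finset (Fin 4 × ℤ)) (p : ℤ × ℤ) :
    #{ℓ ∈ L | OnLine ℓ p} = #{i | lineThrough i p ∈ L} := by
  refine card_nbij' Prod.fst (lineThrough · p) (fun ℓ hℓ => ?_) (fun i hi => ?_)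
    (fun ℓ hℓ => ?_) (fun i _ => rfl)
  · obtain ⟨hℓL, hℓp⟩ := mem_filter.1 hℓ
    simpa [← hℓp.eq_lineThrough] using hℓL
  · exact mem_filter.2 ⟨(mem_filter.1 hi).2, onLine_lineThrough i p⟩
  · exact (mem_filter.1 hℓ).2.eq_lineThrough.symm

lemma card_lineThrough_mem_fullLines_frame_add_le {Q : Finset (ℤ × ℤ)} {n : ℕ}
    {x₁ x₂ y₁ y₂ : ℤ} (hx : x₁ ≤ x₂) (hy : NonfullSpan Q n 1 y₁ y₂) {p : ℤ × ℤ}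
    (hp : p.2 ∈ Icc (1 : ℤ) n) :
    #{i | lineThrough i p ∈ fullLines Q (frame x₁ x₂ y₁ y₂)} +
        (if ¬ IsFull Q (1, p.2) then 1 else 0) ≤
      2 + (if p.1 ∈ Icc x₁ x₂ then 1 else 0) + (if p.2 ∈ Icc y₁ y₂ then 1 else 0) := by
  set L := fullLines Q (frame x₁ x₂ y₁ y₂)
  have hrect : ∀ i, lineThrough i p ∈ L →
      ∃ c : ℤ × ℤ, (c.1 ∈ Icc x₁ x₂ ∧ c.2 ∈ Icc y₁ y₂) ∧ lineCoord i c = lineCoord i p := by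
    intro i hi
    obtain ⟨⟨c, hc, hcp⟩, -⟩ := mem_fullLines.1 hi
    exact ⟨c, mem_Icc_of_mem_frame hx hy.lt.le hc, hcp⟩
  have hcol : (if lineThrough 0 p ∈ L then 1 else 0) ≤ if p.1 ∈ Icc x₁ x₂ then 1 else 0 := by
    by_cases hL : lineThrough 0 p ∈ L
    · obtain ⟨c, hc, hcp⟩ := hrect 0 hL
      have hX : p.1 ∈ Icc x₁ x₂ := by rw [← lineCoord_zero, ← hcp]; exact hc.1
      simp only [hL, hX, if_true, le_refl]
    · simp only [hL, if_false, zero_le]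
  have hrow : (if lineThrough 1 p ∈ L then 1 else 0) + (if ¬ IsFull Q (1, p.2) then 1 else 0) ≤
      if p.2 ∈ Icc y₁ y₂ then 1 else 0 := by
    by_cases hL : lineThrough 1 p ∈ L
    · obtain ⟨c, hc, hcp⟩ := hrect 1 hL
      have hY : p.2 ∈ Icc y₁ y₂ := by rw [← lineCoord_one, ← hcp]; exact hc.2
      have hF : IsFull Q (1, p.2) := (mem_fullLines.1 hL).2
      simp only [hL, hF, hY, if_true, not_true, if_false, le_refl]
    by_cases hF : IsFull Q (1, p.2)
    · simp only [hL, hF, if_false, not_true]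
      split_ifs <;> omega
    · have hY : p.2 ∈ Icc y₁ y₂ := by
        by_contra hY
        exact hF (hy.isFull_of_notMem _ hp hY)
      simp only [hL, hF, hY, if_true, if_false, not_false_eq_true, le_refl]
  have hdiag : ∀ i, (if lineThrough i p ∈ L then 1 else 0) ≤ 1 := fun i => by split_ifs <;> omega
  rw [card_filter, Fin.sum_univ_four]
  have := hdiag 2
  have := hdiag 3
  omega

lemma sum_card_fullLines_frame_add_le {Q S : Finset (ℤ × ℤ)} {n : ℕ} {x₁ x₂ y₁ y₂ : ℤ}
    (hx : x₁ ≤ x₂) (hy : NonfullSpan Q n 1 y₁ y₂) (hS : ∀ p ∈ S, p.2 ∈ Icc (1 : ℤ) n) :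
    ∑ p ∈ S, #{ℓ ∈ fullLines Q (frame x₁ x₂ y₁ y₂) | OnLine ℓ p} +
        #{p ∈ S | ¬ IsFull Q (1, p.2)} ≤
      2 * #S + #{p ∈ S | p.1 ∈ Icc x₁ x₂} + #{p ∈ S | p.2 ∈ Icc y₁ y₂} := by
  calc _ = ∑ p ∈ S, (#{i | lineThrough i p ∈ fullLines Q (frame x₁ x₂ y₁ y₂)} +
          if ¬ IsFull Q (1, p.2) then 1 else 0) := by
        simp only [sum_add_distrib, card_filter_onLine_eq_card_lineThrough,
          card_filter (fun p => ¬ _)]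
    _ ≤ ∑ p ∈ S, (2 + (if p.1 ∈ Icc x₁ x₂ then 1 else 0) +
          (if p.2 ∈ Icc y₁ y₂ then 1 else 0)) :=
        sum_le_sum fun p hp => card_lineThrough_mem_fullLines_frame_add_le hx hy (hS p hp)
    _ = _ := by
        rw [sum_add_distrib, sum_add_distrib, sum_const, smul_eq_mul, card_filter, card_filter,
          mul_comm]

lemma IsGoodPlacement.card_frame_sdiff_le {n : ℕ} {Q : Finset (ℤ × ℤ)} {x₁ x₂ y₁ y₂ : ℤ}
    (hQ : IsGoodPlacement n Q) (hx : NonfullSpan Q n 0 x₁ x₂) (hy : NonfullSpan Q n 1 y₁ y₂) :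
    #(frame x₁ x₂ y₁ y₂ \ Q) ≤
      ∑ p ∈ Q \ frame x₁ x₂ y₁ y₂, #{ℓ ∈ fullLines Q (frame x₁ x₂ y₁ y₂) | OnLine ℓ p} := by
  obtain ⟨-, hno3, hsat⟩ := hQ
  refine card_sdiff_le_sum_card_filter OnLine (fun c hc => ?_) (fun ℓ hℓ => ?_)
  · obtain ⟨hcF, hcQ⟩ := mem_sdiff.1 hc
    have hcb : c ∈ board n := by
      have := mem_Icc_of_mem_frame hx.lt.le hy.lt.le hcF
      simp only [board, mem_product, mem_Icc] at this ⊢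
      have := hx.one_le; have := hx.le; have := hy.one_le; have := hy.le
      omega
    obtain ⟨i, hi⟩ := exists_isFull_lineThrough hno3 (hsat c hcb hcQ) hcQ
    exact ⟨lineThrough i c, mem_fullLines.2 ⟨⟨c, hcF, onLine_lineThrough i c⟩, hi⟩,
      onLine_lineThrough i c⟩
  · have hfull := (mem_fullLines.1 hℓ).2
    rw [hfull]
    apply card_filter_onLine_frame_le_two <;> rintro rfl
    exacts [hx.not_isFull_left hfull, hx.not_isFull_right hfull, hy.not_isFull_left hfull,
      hy.not_isFull_right hfull]

theorem IsGoodPlacement.four_mul_add_card_le {n : ℕ} {Q : Finset (ℤ × ℤ)} {x₁ x₂ y₁ y₂ : ℤ}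
    (hQ : IsGoodPlacement n Q) (hx : NonfullSpan Q n 0 x₁ x₂) (hy : NonfullSpan Q n 1 y₁ y₂) :
    4 * n + #{p ∈ Q | ¬ IsFull Q (1, p.2)} ≤ 4 * #Q + 4 := by
  have hQb : ∀ p ∈ Q, p.1 ∈ Icc (1 : ℤ) n ∧ p.2 ∈ Icc (1 : ℤ) n :=
    fun p hp => mem_product.1 (hQ.1 hp)
  have hcount := hQ.card_frame_sdiff_le hx hy
  have hdeg := sum_card_fullLines_frame_add_le (S := Q \ frame x₁ x₂ y₁ y₂) hx.lt.le hy
    fun p hp => (hQb p (mem_sdiff.1 hp).1).2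
  set F := frame x₁ x₂ y₁ y₂
  have hFrect : ∀ c ∈ F, c.1 ∈ Icc x₁ x₂ ∧ c.2 ∈ Icc y₁ y₂ :=
    fun c hc => mem_Icc_of_mem_frame hx.lt.le hy.lt.le hc
  have hX : #{p ∈ Q | p.1 ∉ Icc x₁ x₂} + 2 * #(Icc x₁ x₂) = 2 * n :=
    hx.card_filter_notMem_Icc fun p hp => (hQb p hp).1
  have hY : #{p ∈ Q | p.2 ∉ Icc y₁ y₂} + 2 * #(Icc y₁ y₂) = 2 * n :=
    hy.card_filter_notMem_Icc fun p hp => (hQb p hp).2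
  have hXF : #{p ∈ Q \ F | p.1 ∈ Icc x₁ x₂} + #{p ∈ Q | p.1 ∉ Icc x₁ x₂} = #(Q \ F) :=
    card_filter_sdiff_add_card_filter_not fun c hc => (hFrect c hc).1
  have hYF : #{p ∈ Q \ F | p.2 ∈ Icc y₁ y₂} + #{p ∈ Q | p.2 ∉ Icc y₁ y₂} = #(Q \ F) :=
    card_filter_sdiff_add_card_filter_not fun c hc => (hFrect c hc).2
  have hnf : #{p ∈ Q | ¬ IsFull Q (1, p.2)} ≤
      #{p ∈ Q \ F | ¬ IsFull Q (1, p.2)} + #(Q ∩ F) := by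
    refine (card_le_card fun p hp => ?_).trans (card_union_le _ _)
    simp only [mem_filter, mem_union, mem_sdiff, mem_inter] at hp ⊢
    tauto
  have hF : #F + 4 = 2 * #(Icc x₁ x₂) + 2 * #(Icc y₁ y₂) := card_frame hx.lt hy.lt
  have hFQ := card_sdiff_add_card_inter F Q
  have hQF := card_sdiff_add_card_inter Q F
  rw [inter_comm] at hFQ
  omega

theorem IsGoodPlacement.card_add_one_eq_and_even {n : ℕ} {Q : Finset (ℤ × ℤ)}
    (hQ : IsGoodPlacement n Q) (hn : 2 ≤ n) (hcard : #Q < n) : #Q + 1 = n ∧ Even #Q := by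
  obtain ⟨x₁, x₂, hx⟩ := exists_nonfullSpan 0 hn hcard
  obtain ⟨y₁, y₂, hy⟩ := exists_nonfullSpan 1 hn hcard
  have hkey := hQ.four_mul_add_card_le hx hy
  have hrows : ∀ p ∈ Q, IsFull Q (1, p.2) := by
    have : #{p ∈ Q | ¬ IsFull Q (1, p.2)} = 0 := by omega
    simpa [filter_eq_empty_iff] using this
  have hQrows :
      #{p ∈ Q | lineCoord 1 p ∈ Q.image (lineCoord 1)} = 2 * #(Q.image (lineCoord 1)) :=
    card_filter_lineCoord_mem_eq_two_mul fun v hv => by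
      obtain ⟨p, hp, rfl⟩ := mem_image.1 hv
      exact hrows p hp
  rw [filter_true_of_mem fun p hp => mem_image_of_mem (lineCoord 1) hp] at hQrows
  exact ⟨by omega, ⟨#(Q.image (lineCoord 1)), by omega⟩⟩

theorem IsGoodPlacement.le_card_of_even {n : ℕ} {Q : Finset (ℤ × ℤ)}
    (hQ : IsGoodPlacement n Q) (hn : Even n) : n ≤ #Q := by
  by_contra! hcard
  obtain ⟨r, rfl⟩ := hn
  obtain ⟨h, s, hs⟩ := hQ.card_add_one_eq_and_even (by omega) hcard
  omega

theorem stmt_2_general (k n : ℕ) (hn : n = 4 * k)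
    (Q : Finset (ℤ × ℤ)) (hQ : IsGoodPlacement n Q) : n ≤ Q.card :=
  hQ.le_card_of_even ⟨2 * k, by omega⟩

theorem stmt_2 (k n : ℕ) (hk : 1 ≤ k) (hn : n = 4 * k)
    (Q : Finset (ℤ × ℤ)) (hQ : IsGoodPlacement n Q) : n ≤ Q.card :=
  stmt_2_general k n hn Q hQ
end

section
/- Let k be a positive integer and let α_1,…,α_{2k}, β_1,…,β_{2k−1}, γ_1,…,γ_{2k−1}, δ_1,…,δ_{2k−1} be real numbers. In the polynomial f(x,y) = ∏_{j=1}^{2k} (x − α_j) · ∏_{j=1}^{2k−1} (y − β_j)(x − y − γ_j)(x + y − δ_j) in ℝ[x,y], the coefficient of the monomial x^{4k−2} y^{4k−1} equals (−1)^k · C(2k−1, k); in particular, this coefficient is nonzero. -/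
open MvPolynomial Finset

lemma degA (α : ℕ → ℝ) (n : ℕ) :
    ((∏ j ∈ range n, (X 0 - C (α j)) : MvPolynomial (Fin 2) ℝ) - X 0 ^ n).totalDegree ≤ n - 1 := by
  induction n with
  | zero => simp
  | succ n ih =>
    have h : (∏ j ∈ range (n+1), (X 0 - C (α j)) : MvPolynomial (Fin 2) ℝ) - X 0 ^ (n+1)
        = ((∏ j ∈ range n, (X 0 - C (α j))) - X 0 ^ n) * (X 0 - C (α n))
          + X 0 ^ n * (- C (α n)) := by
      rw [Finset.prod_range_succ]; ring
    rw [h]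
    refine (totalDegree_add _ _).trans (max_le ?_ ?_)
    · rcases Nat.eq_zero_or_pos n with rfl | hn
      · have h0 : ((∏ j ∈ range 0, (X 0 - C (α j)) : MvPolynomial (Fin 2) ℝ) - X 0 ^ 0) = 0 := by
          simp
        rw [h0, zero_mul]; simp
      · have h1 : (X 0 - C (α n) : MvPolynomial (Fin 2) ℝ).totalDegree ≤ 1 :=
          (totalDegree_sub _ _).trans (by simp)
        refine (totalDegree_mul _ _).trans (le_trans (add_le_add ih h1) (by omega))
    · refine (totalDegree_mul _ _).trans ?_
      simp

lemma degX0' : (X 0 : MvPolynomial (Fin 2) ℝ).totalDegree ≤ 1 := by simp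
lemma degX1' : (X 1 : MvPolynomial (Fin 2) ℝ).totalDegree ≤ 1 := by simp
lemma degCn (c : ℝ) : (-C c : MvPolynomial (Fin 2) ℝ).totalDegree ≤ 0 := by
  simp [totalDegree_neg]

lemma degL0 : (X 0 - X 1 : MvPolynomial (Fin 2) ℝ).totalDegree ≤ 1 :=
  (totalDegree_sub _ _).trans (by simp)

lemma degL1 (c : ℝ) : (X 0 - X 1 - C c : MvPolynomial (Fin 2) ℝ).totalDegree ≤ 1 :=
  (totalDegree_sub _ _).trans (max_le degL0 (by simp))

lemma degL2 (c : ℝ) : (X 0 + X 1 - C c : MvPolynomial (Fin 2) ℝ).totalDegree ≤ 1 :=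
  (totalDegree_sub _ _).trans (max_le ((totalDegree_add _ _).trans (by simp)) (by simp))

lemma degL3 (c : ℝ) : (X 1 - C c : MvPolynomial (Fin 2) ℝ).totalDegree ≤ 1 :=
  (totalDegree_sub _ _).trans (by simp)

lemma degT (b c d : ℝ) :
    ((X 1 - C b) * (X 0 - X 1 - C c) * (X 0 + X 1 - C d)
      - X 1 * (X 0 - X 1) * (X 0 + X 1) : MvPolynomial (Fin 2) ℝ).totalDegree ≤ 2 := by
  have h : ((X 1 - C b) * (X 0 - X 1 - C c) * (X 0 + X 1 - C d)
      - X 1 * (X 0 - X 1) * (X 0 + X 1) : MvPolynomial (Fin 2) ℝ)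
      = (- C b) * (X 0 - X 1 - C c) * (X 0 + X 1 - C d)
        + X 1 * (- C c) * (X 0 + X 1 - C d)
        + X 1 * (X 0 - X 1) * (- C d) := by ring
  rw [h]
  have e1 : ((- C b) * (X 0 - X 1 - C c) : MvPolynomial (Fin 2) ℝ).totalDegree ≤ 1 :=
    (totalDegree_mul _ _).trans (le_trans (add_le_add (degCn b) (degL1 c)) (by norm_num))
  have e2 : (X 1 * (- C c) : MvPolynomial (Fin 2) ℝ).totalDegree ≤ 1 :=
    (totalDegree_mul _ _).trans (le_trans (add_le_add degX1' (degCn c)) (by norm_num))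
  have e3 : (X 1 * (X 0 - X 1) : MvPolynomial (Fin 2) ℝ).totalDegree ≤ 2 :=
    (totalDegree_mul _ _).trans (le_trans (add_le_add degX1' degL0) (by norm_num))
  refine (totalDegree_add _ _).trans (max_le ((totalDegree_add _ _).trans (max_le ?_ ?_)) ?_)
  · exact (totalDegree_mul _ _).trans (le_trans (add_le_add e1 (degL2 d)) (by norm_num))
  · exact (totalDegree_mul _ _).trans (le_trans (add_le_add e2 (degL2 d)) (by norm_num))
  · exact (totalDegree_mul _ _).trans (le_trans (add_le_add e3 (degCn d)) (by norm_num))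

lemma degTfull (b c d : ℝ) :
    ((X 1 - C b) * (X 0 - X 1 - C c) * (X 0 + X 1 - C d) : MvPolynomial (Fin 2) ℝ).totalDegree ≤ 3 :=
  (totalDegree_mul _ _).trans (le_trans (add_le_add ((totalDegree_mul _ _).trans
    (add_le_add (degL3 b) (degL1 c))) (degL2 d)) (by norm_num))

lemma degLfull : (X 1 * (X 0 - X 1) * (X 0 + X 1) : MvPolynomial (Fin 2) ℝ).totalDegree ≤ 3 :=
  (totalDegree_mul _ _).trans (le_trans (add_le_add ((totalDegree_mul _ _).trans
    (add_le_add degX1' degL0)) ((totalDegree_add _ _).trans (max_le degX0' degX1'))) (by norm_num))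

lemma degB (β γ δ : ℕ → ℝ) (n : ℕ) :
    ((∏ j ∈ range n, ((X 1 - C (β j)) * (X 0 - X 1 - C (γ j)) * (X 0 + X 1 - C (δ j)))
      : MvPolynomial (Fin 2) ℝ)
      - (X 1 * (X 0 - X 1) * (X 0 + X 1)) ^ n).totalDegree ≤ 3 * n - 1 := by
  induction n with
  | zero => simp
  | succ n ih =>
    have h : ((∏ j ∈ range (n+1), ((X 1 - C (β j)) * (X 0 - X 1 - C (γ j)) * (X 0 + X 1 - C (δ j)))
        : MvPolynomial (Fin 2) ℝ) - (X 1 * (X 0 - X 1) * (X 0 + X 1)) ^ (n+1))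
        = ((∏ j ∈ range n, ((X 1 - C (β j)) * (X 0 - X 1 - C (γ j)) * (X 0 + X 1 - C (δ j))))
            - (X 1 * (X 0 - X 1) * (X 0 + X 1)) ^ n)
          * ((X 1 - C (β n)) * (X 0 - X 1 - C (γ n)) * (X 0 + X 1 - C (δ n)))
        + (X 1 * (X 0 - X 1) * (X 0 + X 1)) ^ n
          * (((X 1 - C (β n)) * (X 0 - X 1 - C (γ n)) * (X 0 + X 1 - C (δ n)))
              - X 1 * (X 0 - X 1) * (X 0 + X 1)) := by
      rw [Finset.prod_range_succ, pow_succ]; ring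
    rw [h]
    refine (totalDegree_add _ _).trans (max_le ?_ ?_)
    · rcases Nat.eq_zero_or_pos n with rfl | hn
      · have h0 : ((∏ j ∈ range 0, ((X 1 - C (β j)) * (X 0 - X 1 - C (γ j)) * (X 0 + X 1 - C (δ j)))
            : MvPolynomial (Fin 2) ℝ) - (X 1 * (X 0 - X 1) * (X 0 + X 1)) ^ 0) = 0 := by simp
        rw [h0, zero_mul]; simp
      · exact (totalDegree_mul _ _).trans
          (le_trans (add_le_add ih (degTfull _ _ _)) (by omega))
    · have hp : ((X 1 * (X 0 - X 1) * (X 0 + X 1) : MvPolynomial (Fin 2) ℝ) ^ n).totalDegree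
          ≤ 3 * n := by
        refine (totalDegree_pow _ _).trans ?_
        calc n * (X 1 * (X 0 - X 1) * (X 0 + X 1) : MvPolynomial (Fin 2) ℝ).totalDegree
            ≤ n * 3 := Nat.mul_le_mul_left n degLfull
          _ = 3 * n := by ring
      exact (totalDegree_mul _ _).trans
        (le_trans (add_le_add hp (degT _ _ _)) (by omega))

lemma finsupp_eq (a b a' b' : ℕ) :
    (Finsupp.single (0 : Fin 2) a + Finsupp.single 1 b = Finsupp.single 0 a' + Finsupp.single 1 b')
      ↔ a = a' ∧ b = b' := by
  constructor
  · intro h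
    constructor
    · have := DFunLike.congr_fun h 0; simpa using this
    · have := DFunLike.congr_fun h 1; simpa using this
  · rintro ⟨rfl, rfl⟩; rfl

lemma summand_eq (k n i : ℕ) :
    ((X 0 : MvPolynomial (Fin 2) ℝ) ^ (2*k) * (X 1 ^ n *
      ((X 0 ^ 2) ^ i * (-(X 1 ^ 2)) ^ (n - i) * (n.choose i : MvPolynomial (Fin 2) ℝ))))
    = C ((-1) ^ (n - i) * (n.choose i : ℝ)) * (X 0 ^ (2*k + 2*i) * X 1 ^ (n + 2*(n - i))) := by
  have h1 : ((n.choose i : ℕ) : MvPolynomial (Fin 2) ℝ) = C ((n.choose i : ℕ) : ℝ) := by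
    simp
  rw [h1, map_mul, map_pow, map_neg, map_one]
  ring

lemma coeff_XX (d : Fin 2 →₀ ℕ) (a b : ℕ) :
    coeff d ((X 0 : MvPolynomial (Fin 2) ℝ) ^ a * X 1 ^ b)
      = if Finsupp.single 0 a + Finsupp.single 1 b = d then 1 else 0 := by
  have : ((X 0 : MvPolynomial (Fin 2) ℝ) ^ a * X 1 ^ b)
      = monomial (Finsupp.single 0 a + Finsupp.single 1 b) 1 := by
    simp [X_pow_eq_monomial, monomial_mul]
  rw [this, coeff_monomial]

lemma coeffG (k : ℕ) (hk : 1 ≤ k) :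
    coeff (Finsupp.single 0 (4*k-2) + Finsupp.single 1 (4*k-1))
      ((X 0 : MvPolynomial (Fin 2) ℝ) ^ (2*k) * (X 1 * (X 0 - X 1) * (X 0 + X 1)) ^ (2*k-1))
      = (-1:ℝ)^k * ((2*k-1).choose k) := by
  set n := 2*k-1 with hn
  have hL : ((X 1 * (X 0 - X 1) * (X 0 + X 1) : MvPolynomial (Fin 2) ℝ)) ^ n
      = X 1 ^ n * (X 0 ^ 2 + -(X 1 ^ 2)) ^ n := by
    rw [← mul_pow]; congr 1; ring
  rw [hL, add_pow, Finset.mul_sum, Finset.mul_sum, coeff_sum]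
  simp only [summand_eq, coeff_C_mul, coeff_XX]
  rw [Finset.sum_eq_single_of_mem (k-1) (by simp [hn]; omega)]
  · rw [if_pos (by rw [finsupp_eq]; omega)]
    have h1 : n - (k-1) = k := by omega
    have h2 : n.choose (k-1) = n.choose k := by
      have : k - 1 = n - k := by omega
      rw [this, Nat.choose_symm (by omega)]
    rw [h1, h2, mul_one]
  · intro j hj hne
    rw [if_neg, mul_zero]
    rw [finsupp_eq]
    simp only [Finset.mem_range] at hj
    omega

theorem stmt_8 (k : ℕ) (hk : 1 ≤ k) (α β γ δ : ℕ → ℝ)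
    (f : MvPolynomial (Fin 2) ℝ)
    (hf : f = (∏ j ∈ Finset.range (2 * k), (X 0 - C (α j))) *
      ∏ j ∈ Finset.range (2 * k - 1),
        ((X 1 - C (β j)) * (X 0 - X 1 - C (γ j)) * (X 0 + X 1 - C (δ j)))) :
    f.coeff (Finsupp.single 0 (4 * k - 2) + Finsupp.single 1 (4 * k - 1)) =
      (-1 : ℝ) ^ k * (Nat.choose (2 * k - 1) k) ∧
    f.coeff (Finsupp.single 0 (4 * k - 2) + Finsupp.single 1 (4 * k - 1)) ≠ 0 := by
  set d : Fin 2 →₀ ℕ := Finsupp.single 0 (4 * k - 2) + Finsupp.single 1 (4 * k - 1) with hd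
  set g : MvPolynomial (Fin 2) ℝ :=
    (X 0) ^ (2*k) * (X 1 * (X 0 - X 1) * (X 0 + X 1)) ^ (2*k-1) with hg
  set A : MvPolynomial (Fin 2) ℝ := ∏ j ∈ Finset.range (2 * k), (X 0 - C (α j)) with hA
  set B : MvPolynomial (Fin 2) ℝ := ∏ j ∈ Finset.range (2 * k - 1),
        ((X 1 - C (β j)) * (X 0 - X 1 - C (γ j)) * (X 0 + X 1 - C (δ j))) with hB
  -- degree bounds
  have hBdeg : B.totalDegree ≤ 3 * (2*k - 1) := by
    refine (totalDegree_finset_prod _ _).trans ?_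
    calc ∑ j ∈ Finset.range (2*k-1),
          ((X 1 - C (β j)) * (X 0 - X 1 - C (γ j)) * (X 0 + X 1 - C (δ j))
            : MvPolynomial (Fin 2) ℝ).totalDegree
        ≤ ∑ _j ∈ Finset.range (2*k-1), 3 :=
          Finset.sum_le_sum (fun j _ => degTfull (β j) (γ j) (δ j))
      _ = 3 * (2*k-1) := by simp [mul_comm]
  have hX0deg : ((X 0 : MvPolynomial (Fin 2) ℝ) ^ (2*k)).totalDegree ≤ 2*k := by
    simp [totalDegree_X_pow]
  have hdiff : (f - g).totalDegree ≤ 8*k - 4 := by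
    have hsplit : f - g = (A - X 0 ^ (2*k)) * B
        + X 0 ^ (2*k) * (B - (X 1 * (X 0 - X 1) * (X 0 + X 1)) ^ (2*k-1)) := by
      rw [hf, hg]; ring
    rw [hsplit]
    refine (totalDegree_add _ _).trans (max_le ?_ ?_)
    · refine (totalDegree_mul _ _).trans
        (le_trans (add_le_add (degA α (2*k)) hBdeg) (by omega))
    · refine (totalDegree_mul _ _).trans
        (le_trans (add_le_add hX0deg (degB β γ δ (2*k-1))) (by omega))
  have hdsum : ∑ i ∈ d.support, d i = 8*k - 3 := by
    have h1 : ∑ i ∈ d.support, d i = ∑ i : Fin 2, d i :=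
      Finset.sum_subset (Finset.subset_univ _)
        (fun x _ hx => Finsupp.notMem_support_iff.mp hx)
    rw [h1, Fin.sum_univ_two]
    simp only [hd, Finsupp.add_apply, Finsupp.single_apply]
    norm_num
    omega
  have hzero : coeff d (f - g) = 0 := by
    apply coeff_eq_zero_of_totalDegree_lt
    rw [hdsum]
    omega
  rw [coeff_sub, sub_eq_zero] at hzero
  have hval : f.coeff d = (-1 : ℝ) ^ k * (Nat.choose (2 * k - 1) k) := by
    rw [hzero, hg, hd]
    exact coeffG k hk
  refine ⟨hval, ?_⟩
  rw [hval]
  apply mul_ne_zero (pow_ne_zero _ (by norm_num))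
  exact_mod_cast (Nat.choose_pos (by omega : k ≤ 2*k-1)).ne'
end
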